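/- arXiv:2307.11002 — 2 statements merged into one kernel-verified Lean document; each statement's English description precedes it below -/
import Mathlib

section
/- The M-set M itself (acting on itself by left multiplication) is not mild: a surjective injection u ∈ M (i.e., a bijection of ω) is not supported on any co-infinite subset of ω. -/
/-!
If `f ∘ u = u` and `u` is surjective, then `f = id`. A transposition of two points outside `A`
fixes `A` pointwise but is not the identity, so it moves every bijection `u`.
-/

/-- The monoid of injective self-maps of ω (modelled as ℕ), under composition. -/
def M : Submonoid (Function.End ℕ) where
  carrier := {f | Function.Injective f}
  mul_mem' := fun hf hg => hf.comp hg
  one_mem' := fun _ _ h => h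

/-- `x` is supported on `A` if it is fixed by every injection fixing `A` pointwise. -/
def Supported {X : Type*} [MulAction M X] (A : Set ℕ) (x : X) : Prop :=
  ∀ u : M, (∀ a ∈ A, u.1 a = a) → u • x = x

namespace M

def ofPerm (σ : Equiv.Perm ℕ) : M := ⟨⇑σ, σ.injective⟩

@[simp]
theorem ofPerm_apply (σ : Equiv.Perm ℕ) (n : ℕ) : (ofPerm σ).1 n = σ n := rfl

theorem eq_one_of_mul_eq_self_of_surjective {f u : M} (hu : Function.Surjective u.1)
    (h : f * u = u) : f = 1 :=
  Subtype.ext <| hu.injective_comp_right (congrArg Subtype.val h)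

theorem exists_ne_one_fixing {A : Set ℕ} (hA : (Aᶜ).Nontrivial) :
    ∃ f : M, (∀ a ∈ A, f.1 a = a) ∧ f ≠ 1 := by
  obtain ⟨a, ha, b, hb, hab⟩ := hA
  refine ⟨ofPerm (Equiv.swap a b), fun x hx => ?_, fun h => hab ?_⟩
  · rw [ofPerm_apply]
    exact Equiv.swap_apply_of_ne_of_ne (ne_of_mem_of_not_mem hx ha) (ne_of_mem_of_not_mem hx hb)
  · have h_a : (ofPerm (Equiv.swap a b)).1 a = a := congrFun (congrArg Subtype.val h) a
    simpa using h_a.symm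

end M

theorem not_supported_of_surjective {u : M} (hu : Function.Surjective u.1) {A : Set ℕ}
    (hA : (Aᶜ).Nontrivial) : ¬ Supported A u := fun h => by
  obtain ⟨f, hfix, hf⟩ := M.exists_ne_one_fixing hA
  exact hf (M.eq_one_of_mul_eq_self_of_surjective hu (h f hfix))

theorem stmt_8 (u : M) (hu : Function.Surjective u.1)
    (A : Set ℕ) (hA : (Aᶜ : Set ℕ).Infinite) :
    ¬ Supported A u :=
  not_supported_of_surjective hu hA.nontrivial
end

section
/- For any M-set X, the subset X^μ = {x ∈ X : x is supported on some co-infinite subset of ω} is closed under the M-action, and it is the maximal mild M-subset of X. -/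
theorem Function.Injective.mapsTo_compl_of_eqOn {α : Type*} {u : α → α} {S : Set α}
    (hu : Function.Injective u) (hS : Set.EqOn u id S) : Set.MapsTo u Sᶜ Sᶜ := by
  intro x hx hux
  have hfix : u x = x := hu (hS hux)
  exact hx (hfix ▸ hux)

theorem Function.Injective.exists_injective_comp_eq_comp {α β : Type*} [Nonempty α]
    {f : α → β} {u : β → β} (hf : Function.Injective f) (hu : Function.Injective u)
    (hmaps : Set.MapsTo u (Set.range f) (Set.range f)) :
    ∃ v : α → α, Function.Injective v ∧ u ∘ f = f ∘ v := by
  have hcomm : u ∘ f = f ∘ (Function.invFun f ∘ u ∘ f) :=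
    funext fun n => (Function.invFun_eq (hmaps (Set.mem_range_self n))).symm
  exact ⟨_, Function.Injective.of_comp (hcomm ▸ hu.comp hf), hcomm⟩

theorem Function.Injective.infinite_compl_image_union_compl_range {α β : Type*} {f : α → β}
    (hf : Function.Injective f) {A : Set α} (hA : Aᶜ.Infinite) :
    (f '' A ∪ (Set.range f)ᶜ)ᶜ.Infinite := by
  refine (hA.image hf.injOn).mono ?_
  rw [Set.compl_union, compl_compl]
  exact Set.subset_inter (Set.image_compl_subset hf) (Set.image_subset_range f Aᶜ)

theorem Supported.smul {X : Type*} [MulAction M X] {A : Set ℕ} {x : X} (hx : Supported A x)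
    (f : M) : Supported (f.1 '' A ∪ (Set.range f.1)ᶜ) (f • x) := by
  intro u hu
  have hrange : Set.MapsTo u.1 (Set.range f.1) (Set.range f.1) := by
    simpa only [compl_compl] using u.2.mapsTo_compl_of_eqOn fun n hn => hu n (Or.inr hn)
  obtain ⟨v, hv, hcomm⟩ := f.2.exists_injective_comp_eq_comp u.2 hrange
  have huf : u * f = f * ⟨v, hv⟩ := Subtype.ext hcomm
  have hvA : ∀ a ∈ A, v a = a := fun a ha =>
    f.2 ((congrFun hcomm a).symm.trans (hu _ (Or.inl ⟨a, ha, rfl⟩)))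
  rw [← mul_smul, huf, mul_smul, hx _ hvA]

theorem stmt_13 {X : Type*} [MulAction M X] :
    (∀ (f : M), ∀ x ∈ {x : X | ∃ A : Set ℕ, (Aᶜ : Set ℕ).Infinite ∧ Supported A x},
      f • x ∈ {x : X | ∃ A : Set ℕ, (Aᶜ : Set ℕ).Infinite ∧ Supported A x}) ∧
    (∀ Y : Set X, (∀ (f : M), ∀ y ∈ Y, f • y ∈ Y) →
      (∀ y ∈ Y, ∃ A : Set ℕ, (Aᶜ : Set ℕ).Infinite ∧ Supported A y) →
      Y ⊆ {x : X | ∃ A : Set ℕ, (Aᶜ : Set ℕ).Infinite ∧ Supported A x}) := by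
  refine ⟨?_, fun Y _ hY => hY⟩
  rintro f x ⟨A, hA, hx⟩
  exact ⟨_, f.2.infinite_compl_image_union_compl_range hA, hx.smul f⟩
end
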